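/- For every h ∈ G_o restricting to the identity on ∂D, the limit lim_{n→∞} σ(hⁿ)/n exists and equals σ(h) = Flux_ℝ(h); moreover for every c ∈ ℝ there exists such an h with σ(h) = c. Hence the homogenization σ̄ of σ is a surjective extension of the flux homomorphism Flux_ℝ to G_o. -/

import Mathlib

open MeasureTheory Filter Topology Set Function Real

noncomputable section

/-- The closed unit disk in `ℝ²`. -/
def disk : Set (ℝ × ℝ) := {p | p.1 ^ 2 + p.2 ^ 2 ≤ 1}

/-- The boundary circle of the unit disk. -/
def bdry : Set (ℝ × ℝ) := {p | p.1 ^ 2 + p.2 ^ 2 = 1}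

/-- Partial derivative in the `x`-direction. -/
def pdx (f : ℝ × ℝ → ℝ) (p : ℝ × ℝ) : ℝ := fderiv ℝ f p (1, 0)

/-- Partial derivative in the `y`-direction. -/
def pdy (f : ℝ × ℝ → ℝ) (p : ℝ × ℝ) : ℝ := fderiv ℝ f p (0, 1)

/-- The Jacobian determinant of a map `ℝ² → ℝ²`. -/
def jacDet (g : ℝ × ℝ → ℝ × ℝ) (p : ℝ × ℝ) : ℝ :=
  pdx (fun q => (g q).1) p * pdy (fun q => (g q).2) p -
    pdy (fun q => (g q).1) p * pdx (fun q => (g q).2) p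

/-- `g` represents an element of `Symp(D)`: a `C^∞` diffeomorphism of the closed
unit disk onto itself (smooth up to the boundary, i.e. the restriction of a
globally smooth map with globally smooth inverse on the disk) whose Jacobian
determinant is identically `1` on the disk. -/
def IsSymp (g : ℝ × ℝ → ℝ × ℝ) : Prop :=
  ContDiff ℝ (⊤ : ℕ∞) g ∧ MapsTo g disk disk ∧ (∀ p ∈ disk, jacDet g p = 1) ∧
    ∃ g' : ℝ × ℝ → ℝ × ℝ, ContDiff ℝ (⊤ : ℕ∞) g' ∧ MapsTo g' disk disk ∧
      (∀ p ∈ disk, g' (g p) = p) ∧ (∀ p ∈ disk, g (g' p) = p)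

/-- `g` represents an element of `G_o`: a symplectomorphism of the disk fixing the origin. -/
def IsSympO (g : ℝ × ℝ → ℝ × ℝ) : Prop :=
  IsSymp g ∧ g (0, 0) = (0, 0)

/-- `τ_λ(g) = ∫_D g*λ ∧ λ` for `λ = (x dy - y dx)/2`, written out in coordinates. -/
def tauL (g : ℝ × ℝ → ℝ × ℝ) : ℝ :=
  (1 / 4) * ∫ p in disk,
    (p.1 * ((g p).1 * pdx (fun q => (g q).2) p - (g p).2 * pdx (fun q => (g q).1) p) +
     p.2 * ((g p).1 * pdy (fun q => (g q).2) p - (g p).2 * pdy (fun q => (g q).1) p))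

/-- `σ(g) = ∫_γ (g*λ - λ)` along the radial path `γ(t) = (t,0)`, in coordinates. -/
def sigmaQ (g : ℝ × ℝ → ℝ × ℝ) : ℝ :=
  (1 / 2) * ∫ t in (0:ℝ)..1,
    ((g (t, 0)).1 * pdx (fun q => (g q).2) (t, 0) -
      (g (t, 0)).2 * pdx (fun q => (g q).1) (t, 0))

/-- `G` is a smooth isotopy in `Symp(D)` starting at the identity. -/
def IsIsotopy (G : ℝ → ℝ × ℝ → ℝ × ℝ) : Prop :=
  ContDiff ℝ (⊤ : ℕ∞) (fun q : ℝ × (ℝ × ℝ) => G q.1 q.2) ∧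
    (∀ t ∈ Icc (0:ℝ) 1, IsSymp (G t)) ∧ (∀ p ∈ disk, G 0 p = p)

/-- `f` is a family of Hamiltonian functions for the isotopy `G`, i.e.
`i_{X_t} ω = d f_t` where `X_t = (∂g_t/∂t) ∘ g_t⁻¹`; since `g_t` maps the disk
onto itself this is expressed at the points `G t p`, `p ∈ D`. -/
def IsHam (G : ℝ → ℝ × ℝ → ℝ × ℝ) (f : ℝ → ℝ × ℝ → ℝ) : Prop :=
  ContDiff ℝ (⊤ : ℕ∞) (fun q : ℝ × (ℝ × ℝ) => f q.1 q.2) ∧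
    ∀ t ∈ Icc (0:ℝ) 1, ∀ p ∈ disk,
      pdx (f t) (G t p) = -(deriv (fun s => G s p) t).2 ∧
      pdy (f t) (G t p) = (deriv (fun s => G s p) t).1

/-- `φ` is the lift of the boundary isotopy of `G`, with `φ 0 = id`. -/
def IsBoundaryLift (G : ℝ → ℝ × ℝ → ℝ × ℝ) (φ : ℝ → ℝ → ℝ) : Prop :=
  ContDiff ℝ (⊤ : ℕ∞) (fun q : ℝ × ℝ => φ q.1 q.2) ∧
    (∀ t ∈ Icc (0:ℝ) 1, StrictMono (φ t) ∧ ∀ θ : ℝ, φ t (θ + 2 * π) = φ t θ + 2 * π) ∧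
    (∀ θ : ℝ, φ 0 θ = θ) ∧
    (∀ t ∈ Icc (0:ℝ) 1, ∀ θ : ℝ,
      G t (Real.cos θ, Real.sin θ) = (Real.cos (φ t θ), Real.sin (φ t θ)))

lemma contDiff_pdx {f : ℝ × ℝ → ℝ} (hf : ContDiff ℝ (⊤ : ℕ∞) f) : ContDiff ℝ (⊤ : ℕ∞) (pdx f) :=
  (hf.fderiv_right (by simp)).clm_apply contDiff_const
lemma contDiff_pdy {f : ℝ × ℝ → ℝ} (hf : ContDiff ℝ (⊤ : ℕ∞) f) : ContDiff ℝ (⊤ : ℕ∞) (pdy f) :=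
  (hf.fderiv_right (by simp)).clm_apply contDiff_const

lemma pdy_add {a b : ℝ × ℝ → ℝ} {p : ℝ × ℝ} (ha : DifferentiableAt ℝ a p)
    (hb : DifferentiableAt ℝ b p) :
    pdy (fun q => a q + b q) p = pdy a p + pdy b p := by
  unfold pdy; rw [fderiv_fun_add ha hb]; rfl
lemma pdx_sub {a b : ℝ × ℝ → ℝ} {p : ℝ × ℝ} (ha : DifferentiableAt ℝ a p)
    (hb : DifferentiableAt ℝ b p) :
    pdx (fun q => a q - b q) p = pdx a p - pdx b p := by
  unfold pdx; rw [fderiv_fun_sub ha hb]; rfl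
lemma pdy_sub {a b : ℝ × ℝ → ℝ} {p : ℝ × ℝ} (ha : DifferentiableAt ℝ a p)
    (hb : DifferentiableAt ℝ b p) :
    pdy (fun q => a q - b q) p = pdy a p - pdy b p := by
  unfold pdy; rw [fderiv_fun_sub ha hb]; rfl
lemma pdx_mul {a b : ℝ × ℝ → ℝ} {p : ℝ × ℝ} (ha : DifferentiableAt ℝ a p)
    (hb : DifferentiableAt ℝ b p) :
    pdx (fun q => a q * b q) p = pdx a p * b p + a p * pdx b p := by
  unfold pdx; rw [fderiv_fun_mul ha hb]; simp; ring
lemma pdy_mul {a b : ℝ × ℝ → ℝ} {p : ℝ × ℝ} (ha : DifferentiableAt ℝ a p)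
    (hb : DifferentiableAt ℝ b p) :
    pdy (fun q => a q * b q) p = pdy a p * b p + a p * pdy b p := by
  unfold pdy; rw [fderiv_fun_mul ha hb]; simp; ring
lemma pdx_const_mul {a : ℝ × ℝ → ℝ} {p : ℝ × ℝ} (c : ℝ) (ha : DifferentiableAt ℝ a p) :
    pdx (fun q => c * a q) p = c * pdx a p := by
  unfold pdx; rw [fderiv_const_mul ha]; rfl
lemma pdy_const_mul {a : ℝ × ℝ → ℝ} {p : ℝ × ℝ} (c : ℝ) (ha : DifferentiableAt ℝ a p) :
    pdy (fun q => c * a q) p = c * pdy a p := by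
  unfold pdy; rw [fderiv_const_mul ha]; rfl

lemma pdy_snd_div {p : ℝ × ℝ} : pdy (fun q : ℝ × ℝ => q.2 / 2) p = 1 / 2 := by
  unfold pdy
  simp only [div_eq_mul_inv]
  rw [(hasFDerivAt_snd.mul_const ((2:ℝ)⁻¹)).fderiv]
  norm_num
lemma pdx_fst_div {p : ℝ × ℝ} : pdx (fun q : ℝ × ℝ => q.1 / 2) p = 1 / 2 := by
  unfold pdx
  simp only [div_eq_mul_inv]
  rw [(hasFDerivAt_fst.mul_const ((2:ℝ)⁻¹)).fderiv]
  norm_num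

lemma pd_symm {f : ℝ × ℝ → ℝ} (hf : ContDiff ℝ (⊤ : ℕ∞) f) (p : ℝ × ℝ) :
    pdx (pdy f) p = pdy (pdx f) p := by
  have hd : Differentiable ℝ (fderiv ℝ f) :=
    (hf.fderiv_right (m := (⊤ : ℕ∞)) (by simp)).differentiable (by simp)
  have h1 : ∀ w : ℝ × ℝ, fderiv ℝ (fun q => fderiv ℝ f q w) p =
      (fderiv ℝ (fderiv ℝ f) p).flip w := by
    intro w
    rw [fderiv_clm_apply (hd p) (differentiableAt_const w)]
    simp
  have hsymm : IsSymmSndFDerivAt ℝ f p :=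
    hf.contDiffAt.isSymmSndFDerivAt (by rw [minSmoothness_of_isRCLikeNormedField]; exact le_trans (b := ((2:ℕ∞) : WithTop ℕ∞)) (by norm_num) (WithTop.coe_le_coe.mpr le_top))
  unfold pdx pdy
  rw [show (fun q => fderiv ℝ f q (0,1)) = (fun q => fderiv ℝ f q ((0:ℝ),(1:ℝ))) from rfl]
  rw [h1 ((0:ℝ),(1:ℝ)), h1 ((1:ℝ),(0:ℝ))]
  simpa using hsymm (1,0) (0,1)

def Pf (g : ℝ × ℝ → ℝ × ℝ) : ℝ × ℝ → ℝ := fun q =>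
  (1/2) * ((g q).1 * pdx (fun r => (g r).2) q - (g q).2 * pdx (fun r => (g r).1) q) + q.2 / 2
def Qf (g : ℝ × ℝ → ℝ × ℝ) : ℝ × ℝ → ℝ := fun q =>
  (1/2) * ((g q).1 * pdy (fun r => (g r).2) q - (g q).2 * pdy (fun r => (g r).1) q) - q.1 / 2

lemma contDiff_Pf {g : ℝ × ℝ → ℝ × ℝ} (hg : ContDiff ℝ (⊤ : ℕ∞) g) : ContDiff ℝ (⊤ : ℕ∞) (Pf g) := by
  unfold Pf
  exact (contDiff_const.mul (((contDiff_fst.comp hg).mul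
    (contDiff_pdx (contDiff_snd.comp hg))).sub ((contDiff_snd.comp hg).mul
    (contDiff_pdx (contDiff_fst.comp hg))))).add (contDiff_snd.div_const 2)

lemma contDiff_Qf {g : ℝ × ℝ → ℝ × ℝ} (hg : ContDiff ℝ (⊤ : ℕ∞) g) : ContDiff ℝ (⊤ : ℕ∞) (Qf g) := by
  unfold Qf
  exact (contDiff_const.mul (((contDiff_fst.comp hg).mul
    (contDiff_pdy (contDiff_snd.comp hg))).sub ((contDiff_snd.comp hg).mul
    (contDiff_pdy (contDiff_fst.comp hg))))).sub (contDiff_fst.div_const 2)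

lemma closedness {g : ℝ × ℝ → ℝ × ℝ} (hg : ContDiff ℝ (⊤ : ℕ∞) g) (p : ℝ × ℝ)
    (hj : jacDet g p = 1) : pdx (Qf g) p = pdy (Pf g) p := by
  have hu : ContDiff ℝ (⊤ : ℕ∞) (fun q => (g q).1) := contDiff_fst.comp hg
  have hv : ContDiff ℝ (⊤ : ℕ∞) (fun q => (g q).2) := contDiff_snd.comp hg
  have d : ∀ {f : ℝ × ℝ → ℝ}, ContDiff ℝ (⊤ : ℕ∞) f → DifferentiableAt ℝ f p :=
    fun hf => (hf.differentiable (by simp)) p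
  unfold Qf Pf
  rw [pdx_sub (d (contDiff_const.mul ((hu.mul (contDiff_pdy hv)).sub (hv.mul (contDiff_pdy hu)))))
      (d (contDiff_fst.div_const 2)),
    pdy_add (d (contDiff_const.mul ((hu.mul (contDiff_pdx hv)).sub (hv.mul (contDiff_pdx hu)))))
      (d (contDiff_snd.div_const 2)),
    pdx_const_mul _ (d ((hu.mul (contDiff_pdy hv)).sub (hv.mul (contDiff_pdy hu)))),
    pdy_const_mul _ (d ((hu.mul (contDiff_pdx hv)).sub (hv.mul (contDiff_pdx hu)))),
    pdx_sub (d (hu.mul (contDiff_pdy hv))) (d (hv.mul (contDiff_pdy hu))),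
    pdy_sub (d (hu.mul (contDiff_pdx hv))) (d (hv.mul (contDiff_pdx hu))),
    pdx_mul (d hu) (d (contDiff_pdy hv)), pdx_mul (d hv) (d (contDiff_pdy hu)),
    pdy_mul (d hu) (d (contDiff_pdx hv)), pdy_mul (d hv) (d (contDiff_pdx hu)),
    pd_symm hv p, pd_symm hu p, pdx_fst_div, pdy_snd_div]
  have := hj
  unfold jacDet at this
  nlinarith [this]

lemma clm_eval (L : ℝ × ℝ →L[ℝ] ℝ) (v : ℝ × ℝ) :
    L v = v.1 * L (1, 0) + v.2 * L (0, 1) := by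
  have h : L v = L (v.1 • ((1:ℝ), (0:ℝ)) + v.2 • ((0:ℝ), (1:ℝ))) := by
    congr 1; ext <;> simp
  rw [h, map_add, L.map_smul, L.map_smul, smul_eq_mul, smul_eq_mul]

-- fderiv of a composition with a map into ℝ×ℝ, evaluated at a vector
lemma fderiv_comp_eval (f : ℝ × ℝ → ℝ) (h : ℝ × ℝ → ℝ × ℝ)
    (hf : Differentiable ℝ f) (hh : Differentiable ℝ h) (p w : ℝ × ℝ) :
    fderiv ℝ (fun q => f (h q)) p w =
      (fderiv ℝ h p w).1 * pdx f (h p) + (fderiv ℝ h p w).2 * pdy f (h p) := by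
  have : fderiv ℝ (fun q => f (h q)) p = (fderiv ℝ f (h p)).comp (fderiv ℝ h p) :=
    fderiv_comp p (hf _) (hh _)
  rw [this, ContinuousLinearMap.comp_apply]
  exact clm_eval _ _

lemma fderiv_fst_eval (h : ℝ × ℝ → ℝ × ℝ) (hh : Differentiable ℝ h) (p w : ℝ × ℝ) :
    fderiv ℝ (fun q => (h q).1) p w = (fderiv ℝ h p w).1 := by
  rw [((hh p).hasFDerivAt.fst).fderiv]; rfl

lemma fderiv_snd_eval (h : ℝ × ℝ → ℝ × ℝ) (hh : Differentiable ℝ h) (p w : ℝ × ℝ) :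
    fderiv ℝ (fun q => (h q).2) p w = (fderiv ℝ h p w).2 := by
  rw [((hh p).hasFDerivAt.snd).fderiv]; rfl

lemma jacDet_comp (g h : ℝ × ℝ → ℝ × ℝ) (hg : ContDiff ℝ (⊤ : ℕ∞) g) (hh : ContDiff ℝ (⊤ : ℕ∞) h)
    (p : ℝ × ℝ) : jacDet (fun q => g (h q)) p = jacDet g (h p) * jacDet h p := by
  have hgd := hg.differentiable (by simp)
  have hhd := hh.differentiable (by simp)
  have hg1 : Differentiable ℝ (fun q => (g q).1) := fun q => ((hgd q).fst)
  have hg2 : Differentiable ℝ (fun q => (g q).2) := fun q => ((hgd q).snd)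
  have e1 : ∀ w, fderiv ℝ (fun q => (g (h q)).1) p w =
      (fderiv ℝ h p w).1 * pdx (fun q => (g q).1) (h p) +
      (fderiv ℝ h p w).2 * pdy (fun q => (g q).1) (h p) :=
    fun w => fderiv_comp_eval _ h hg1 hhd p w
  have e2 : ∀ w, fderiv ℝ (fun q => (g (h q)).2) p w =
      (fderiv ℝ h p w).1 * pdx (fun q => (g q).2) (h p) +
      (fderiv ℝ h p w).2 * pdy (fun q => (g q).2) (h p) :=
    fun w => fderiv_comp_eval _ h hg2 hhd p w
  have v1 : ∀ w, (fderiv ℝ h p w).1 = fderiv ℝ (fun q => (h q).1) p w :=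
    fun w => (fderiv_fst_eval h hhd p w).symm
  have v2 : ∀ w, (fderiv ℝ h p w).2 = fderiv ℝ (fun q => (h q).2) p w :=
    fun w => (fderiv_snd_eval h hhd p w).symm
  simp only [jacDet, pdx, pdy, e1, e2, v1, v2]
  ring

lemma IsSymp.comp {g h : ℝ × ℝ → ℝ × ℝ} (hg : IsSymp g) (hh : IsSymp h) :
    IsSymp (fun q => g (h q)) := by
  obtain ⟨hgs, hgm, hgj, g', hg's, hg'm, hg'l, hg'r⟩ := hg
  obtain ⟨hhs, hhm, hhj, h', hh's, hh'm, hh'l, hh'r⟩ := hh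
  refine ⟨hgs.comp hhs, hgm.comp hhm, ?_, fun q => h' (g' q), hh's.comp hg's,
    hh'm.comp hg'm, ?_, ?_⟩
  · intro p hp
    rw [jacDet_comp g h hgs hhs p, hgj _ (hhm hp), hhj _ hp, mul_one]
  · intro p hp
    show h' (g' (g (h p))) = p
    rw [hg'l _ (hhm hp), hh'l _ hp]
  · intro p hp
    show g (h (h' (g' p))) = p
    rw [hh'r _ (hg'm hp), hg'r _ hp]

lemma IsSymp.id : IsSymp (fun q : ℝ × ℝ => q) := by
  refine ⟨contDiff_id, mapsTo_id _, ?_, (fun q => q), contDiff_id, mapsTo_id _,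
    fun p _ => rfl, fun p _ => rfl⟩
  intro p _
  simp only [jacDet, pdx, pdy]
  rw [show (fun q : ℝ × ℝ => q.1) = Prod.fst from rfl, show (fun q : ℝ × ℝ => q.2) = Prod.snd from rfl,
    fderiv_fst, fderiv_snd]
  simp

-- appended to t3 content (will cat t3 minus import + this)
abbrev fstL : ℝ × ℝ →L[ℝ] ℝ := ContinuousLinearMap.fst ℝ ℝ ℝ
abbrev sndL : ℝ × ℝ →L[ℝ] ℝ := ContinuousLinearMap.snd ℝ ℝ ℝ


def Ff (g : ℝ × ℝ → ℝ × ℝ) : ℝ × ℝ → ℝ := fun p =>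
  ∫ s in (0:ℝ)..1, (Pf g (s • p) * p.1 + Qf g (s • p) * p.2)

def Fd (g : ℝ × ℝ → ℝ × ℝ) (x : ℝ × ℝ) (s : ℝ) : ℝ × ℝ →L[ℝ] ℝ :=
  (Pf g (s • x) • fstL + x.1 • (s • fderiv ℝ (Pf g) (s • x))) +
  (Qf g (s • x) • sndL + x.2 • (s • fderiv ℝ (Qf g) (s • x)))

lemma smul_mem_disk {p : ℝ × ℝ} (hp : p ∈ disk) {s : ℝ} (h0 : 0 ≤ s) (h1 : s ≤ 1) :
    s • p ∈ disk := by
  simp only [disk, Set.mem_setOf_eq, Prod.smul_fst, Prod.smul_snd, smul_eq_mul] at *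
  have hs2 : s ^ 2 ≤ 1 := by nlinarith
  nlinarith [mul_le_mul_of_nonneg_left hp (sq_nonneg s), sq_nonneg s]

lemma hasFDerivAt_comp_smul {f : ℝ × ℝ → ℝ} (hf : ContDiff ℝ (⊤ : ℕ∞) f) (s : ℝ) (x : ℝ × ℝ) :
    HasFDerivAt (fun y => f (s • y)) (s • fderiv ℝ f (s • x)) x := by
  have hsm : HasFDerivAt (fun y : ℝ × ℝ => s • y)
      (s • ContinuousLinearMap.id ℝ (ℝ × ℝ)) x := (hasFDerivAt_id x).const_smul s
  have h1 := ((hf.differentiable (by simp) (s • x)).hasFDerivAt).comp x hsm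
  refine h1.congr_fderiv ?_
  ext <;> simp

lemma hasFDerivAt_Fd {g : ℝ × ℝ → ℝ × ℝ} (hg : ContDiff ℝ (⊤ : ℕ∞) g) (s : ℝ) (x : ℝ × ℝ) :
    HasFDerivAt (fun y => Pf g (s • y) * y.1 + Qf g (s • y) * y.2) (Fd g x s) x := by
  have hP := hasFDerivAt_comp_smul (contDiff_Pf hg) s x
  have hQ := hasFDerivAt_comp_smul (contDiff_Qf hg) s x
  exact (hP.mul hasFDerivAt_fst).add (hQ.mul hasFDerivAt_snd)

lemma continuous_Fd {g : ℝ × ℝ → ℝ × ℝ} (hg : ContDiff ℝ (⊤ : ℕ∞) g) :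
    Continuous (fun q : ℝ × (ℝ × ℝ) => Fd g q.2 q.1) := by
  have hP : Continuous (fderiv ℝ (Pf g)) := ((contDiff_Pf hg).fderiv_right (m := (⊤ : ℕ∞)) (by simp)).continuous
  have hQ : Continuous (fderiv ℝ (Qf g)) := ((contDiff_Qf hg).fderiv_right (m := (⊤ : ℕ∞)) (by simp)).continuous
  have hPc : Continuous (Pf g) := (contDiff_Pf hg).continuous
  have hQc : Continuous (Qf g) := (contDiff_Qf hg).continuous
  have hsc : Continuous (fun q : ℝ × (ℝ × ℝ) => q.1 • q.2) :=
    continuous_fst.smul continuous_snd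
  unfold Fd
  exact (((hPc.comp hsc).smul continuous_const).add
    ((continuous_snd.fst).smul (continuous_fst.smul (hP.comp hsc)))).add
    (((hQc.comp hsc).smul continuous_const).add
    ((continuous_snd.snd).smul (continuous_fst.smul (hQ.comp hsc))))

lemma Fd_apply1 {g : ℝ × ℝ → ℝ × ℝ} (x : ℝ × ℝ) (s : ℝ) :
    (Fd g x s) (1, 0) = Pf g (s • x) + x.1 * (s * pdx (Pf g) (s • x))
      + x.2 * (s * pdx (Qf g) (s • x)) := by
  simp [Fd, pdx]

lemma Fd_apply2 {g : ℝ × ℝ → ℝ × ℝ} (x : ℝ × ℝ) (s : ℝ) :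
    (Fd g x s) (0, 1) = Qf g (s • x) + x.1 * (s * pdy (Pf g) (s • x))
      + x.2 * (s * pdy (Qf g) (s • x)) := by
  simp [Fd, pdy]; ring

lemma continuous_Fd_slice {g : ℝ × ℝ → ℝ × ℝ} (hg : ContDiff ℝ (⊤ : ℕ∞) g) (p : ℝ × ℝ) :
    Continuous (fun s : ℝ => Fd g p s) := by
  have hP : Continuous (fderiv ℝ (Pf g)) :=
    ((contDiff_Pf hg).fderiv_right (m := (⊤ : ℕ∞)) (by simp)).continuous
  have hQ : Continuous (fderiv ℝ (Qf g)) :=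
    ((contDiff_Qf hg).fderiv_right (m := (⊤ : ℕ∞)) (by simp)).continuous
  have hPc : Continuous (Pf g) := (contDiff_Pf hg).continuous
  have hQc : Continuous (Qf g) := (contDiff_Qf hg).continuous
  have hsc : Continuous (fun s : ℝ => s • p) := continuous_id.smul continuous_const
  unfold Fd
  exact (((hPc.comp hsc).smul continuous_const).add
    ((continuous_const (y := p.1)).smul (continuous_id.smul (hP.comp hsc)))).add
    (((hQc.comp hsc).smul continuous_const).add
    ((continuous_const (y := p.2)).smul (continuous_id.smul (hQ.comp hsc))))

lemma integral_Fd_eval1 {g : ℝ × ℝ → ℝ × ℝ} (hg : ContDiff ℝ (⊤ : ℕ∞) g)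
    (hj : ∀ q ∈ disk, jacDet g q = 1) {p : ℝ × ℝ} (hp : p ∈ disk) :
    ∫ s in (0:ℝ)..1, (Fd g p s) (1, 0) = Pf g p := by
  have heq : ∀ s ∈ uIcc (0:ℝ) 1, HasDerivAt (fun t => t * Pf g (t • p))
      ((Fd g p s) (1, 0)) s := by
    intro s hs
    rw [uIcc_of_le zero_le_one] at hs
    have hsp : s • p ∈ disk := smul_mem_disk hp hs.1 hs.2
    have hc : HasDerivAt (fun t : ℝ => t • p) p s := by
      simpa using (hasDerivAt_id s).smul_const p
    have hP : HasDerivAt (fun t => Pf g (t • p)) (fderiv ℝ (Pf g) (s • p) p) s :=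
      (((contDiff_Pf hg).differentiable (by simp) (s • p)).hasFDerivAt).comp_hasDerivAt (f := fun t : ℝ => t • p) s hc
    have h := (hasDerivAt_id s).mul hP
    refine h.congr_deriv ?_
    rw [Fd_apply1, clm_eval (fderiv ℝ (Pf g) (s • p)) p,
      closedness hg (s • p) (hj _ hsp)]
    unfold pdx pdy
    simp only [id_eq]
    ring
  have hint : IntervalIntegrable (fun s => (Fd g p s) (1, 0)) volume 0 1 := by
    apply Continuous.intervalIntegrable
    exact (ContinuousLinearMap.apply ℝ ℝ ((1:ℝ), (0:ℝ))).continuous.comp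
      (continuous_Fd_slice hg p)
  have := intervalIntegral.integral_eq_sub_of_hasDerivAt heq hint
  rw [this]
  simp

lemma integral_Fd_eval2 {g : ℝ × ℝ → ℝ × ℝ} (hg : ContDiff ℝ (⊤ : ℕ∞) g)
    (hj : ∀ q ∈ disk, jacDet g q = 1) {p : ℝ × ℝ} (hp : p ∈ disk) :
    ∫ s in (0:ℝ)..1, (Fd g p s) (0, 1) = Qf g p := by
  have heq : ∀ s ∈ uIcc (0:ℝ) 1, HasDerivAt (fun t => t * Qf g (t • p))
      ((Fd g p s) (0, 1)) s := by
    intro s hs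
    rw [uIcc_of_le zero_le_one] at hs
    have hsp : s • p ∈ disk := smul_mem_disk hp hs.1 hs.2
    have hc : HasDerivAt (fun t : ℝ => t • p) p s := by
      simpa using (hasDerivAt_id s).smul_const p
    have hQ : HasDerivAt (fun t => Qf g (t • p)) (fderiv ℝ (Qf g) (s • p) p) s :=
      (((contDiff_Qf hg).differentiable (by simp) (s • p)).hasFDerivAt).comp_hasDerivAt (f := fun t : ℝ => t • p) s hc
    have h := (hasDerivAt_id s).mul hQ
    refine h.congr_deriv ?_
    rw [Fd_apply2, clm_eval (fderiv ℝ (Qf g) (s • p)) p,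
      ← closedness hg (s • p) (hj _ hsp)]
    unfold pdx pdy
    simp only [id_eq]
    ring
  have hint : IntervalIntegrable (fun s => (Fd g p s) (0, 1)) volume 0 1 := by
    apply Continuous.intervalIntegrable
    exact (ContinuousLinearMap.apply ℝ ℝ ((0:ℝ), (1:ℝ))).continuous.comp
      (continuous_Fd_slice hg p)
  have := intervalIntegral.integral_eq_sub_of_hasDerivAt heq hint
  rw [this]
  simp

lemma hasFDerivAt_Ff {g : ℝ × ℝ → ℝ × ℝ} (hg : ContDiff ℝ (⊤ : ℕ∞) g)
    (hj : ∀ q ∈ disk, jacDet g q = 1) {p : ℝ × ℝ} (hp : p ∈ disk) :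
    HasFDerivAt (Ff g) (Pf g p • fstL + Qf g p • sndL) p := by
  have hPc : Continuous (Pf g) := (contDiff_Pf hg).continuous
  have hQc : Continuous (Qf g) := (contDiff_Qf hg).continuous
  have hFdInt : IntervalIntegrable (Fd g p) volume 0 1 :=
    (continuous_Fd_slice hg p).intervalIntegrable _ _
  obtain ⟨C, hC⟩ := ((isCompact_Icc (a := (0:ℝ)) (b := 1)).prod
    (isCompact_closedBall p 1)).exists_bound_of_continuousOn
    (continuous_Fd hg).continuousOn
  have key : HasFDerivAt (fun x : ℝ × ℝ =>
      ∫ s in (0:ℝ)..1, (Pf g (s • x) * x.1 + Qf g (s • x) * x.2))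
      (∫ s in (0:ℝ)..1, Fd g p s) p := by
    apply hasFDerivAt_integral_of_dominated_of_fderiv_le'' (s := Metric.ball p 1)
      (bound := fun _ => C) (Metric.ball_mem_nhds p one_pos)
    · apply Filter.Eventually.of_forall
      intro x
      apply Continuous.aestronglyMeasurable
      exact ((hPc.comp (continuous_id.smul continuous_const)).mul continuous_const).add
        ((hQc.comp (continuous_id.smul continuous_const)).mul continuous_const)
    · apply Continuous.intervalIntegrable
      exact ((hPc.comp (continuous_id.smul continuous_const)).mul continuous_const).add
        ((hQc.comp (continuous_id.smul continuous_const)).mul continuous_const)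
    · exact (continuous_Fd_slice hg p).aestronglyMeasurable
    · filter_upwards [ae_restrict_mem measurableSet_uIoc] with s hs
      intro x hx
      refine hC (s, x) ⟨?_, Metric.ball_subset_closedBall hx⟩
      rw [uIoc_of_le zero_le_one] at hs
      exact Set.Ioc_subset_Icc_self hs
    · exact intervalIntegrable_const
    · exact Filter.Eventually.of_forall fun s => fun x _ => hasFDerivAt_Fd hg s x
  have heq : (∫ s in (0:ℝ)..1, Fd g p s) = Pf g p • fstL + Qf g p • sndL := by
    apply ContinuousLinearMap.ext
    intro v
    rw [clm_eval (∫ s in (0:ℝ)..1, Fd g p s) v,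
      clm_eval (Pf g p • fstL + Qf g p • sndL) v,
      ContinuousLinearMap.intervalIntegral_apply hFdInt,
      ContinuousLinearMap.intervalIntegral_apply hFdInt,
      integral_Fd_eval1 hg hj hp, integral_Fd_eval2 hg hj hp]
    simp
  rw [heq] at key
  exact key

lemma path_integral {g : ℝ × ℝ → ℝ × ℝ} (hg : ContDiff ℝ (⊤ : ℕ∞) g)
    (hj : ∀ q ∈ disk, jacDet g q = 1) (c c' : ℝ → ℝ × ℝ)
    (hc : ∀ t, HasDerivAt c (c' t) t) (hc' : Continuous c')
    (hmem : ∀ t ∈ uIcc (0:ℝ) 1, c t ∈ disk) :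
    ∫ t in (0:ℝ)..1, (Pf g (c t) * (c' t).1 + Qf g (c t) * (c' t).2)
      = Ff g (c 1) - Ff g (c 0) := by
  have hcd : Differentiable ℝ c := fun t => (hc t).differentiableAt
  have hccont : Continuous c := hcd.continuous
  have hder : ∀ t ∈ uIcc (0:ℝ) 1, HasDerivAt (fun t => Ff g (c t))
      (Pf g (c t) * (c' t).1 + Qf g (c t) * (c' t).2) t := by
    intro t ht
    have h := (hasFDerivAt_Ff hg hj (hmem t ht)).comp_hasDerivAt t (hc t)
    exact h
  have hint : IntervalIntegrable
      (fun t => Pf g (c t) * (c' t).1 + Qf g (c t) * (c' t).2) volume 0 1 := by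
    apply Continuous.intervalIntegrable
    exact (((contDiff_Pf hg).continuous.comp hccont).mul (hc'.fst)).add
      (((contDiff_Qf hg).continuous.comp hccont).mul (hc'.snd))
  simpa using intervalIntegral.integral_eq_sub_of_hasDerivAt hder hint

lemma mem_disk_t {t : ℝ} (h0 : 0 ≤ t) (h1 : t ≤ 1) : ((t, 0) : ℝ × ℝ) ∈ disk := by
  simp only [disk, Set.mem_setOf_eq]
  nlinarith

lemma sigmaQ_eq_Ff {g : ℝ × ℝ → ℝ × ℝ} (hg : ContDiff ℝ (⊤ : ℕ∞) g)
    (hj : ∀ q ∈ disk, jacDet g q = 1) :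
    sigmaQ g = Ff g (1, 0) - Ff g (0, 0) := by
  have hpi := path_integral hg hj (fun t => ((t, 0) : ℝ × ℝ)) (fun _ => ((1 : ℝ), (0 : ℝ)))
    (fun t => (hasDerivAt_id t).prodMk (hasDerivAt_const t 0)) continuous_const
    (fun t ht => by
      rw [uIcc_of_le zero_le_one] at ht
      exact mem_disk_t ht.1 ht.2)
  have : (fun t : ℝ => Pf g (t, 0) * ((1:ℝ), (0:ℝ)).1 + Qf g (t, 0) * ((1:ℝ), (0:ℝ)).2)
      = fun t : ℝ => Pf g (t, 0) := by
    funext t; simp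
  unfold sigmaQ
  rw [show (fun t : ℝ => ((g (t, 0)).1 * pdx (fun q => (g q).2) (t, 0) -
      (g (t, 0)).2 * pdx (fun q => (g q).1) (t, 0))) = fun t : ℝ => 2 * Pf g ((t, 0) : ℝ × ℝ)
    from funext fun t => by unfold Pf; simp]
  rw [intervalIntegral.integral_const_mul]
  rw [this] at hpi
  rw [hpi]
  ring

lemma sigmaQ_comp {g h : ℝ × ℝ → ℝ × ℝ}
    (hgc : ContDiff ℝ (⊤ : ℕ∞) g) (hgj : ∀ q ∈ disk, jacDet g q = 1)
    (hhc : ContDiff ℝ (⊤ : ℕ∞) h) (hhm : MapsTo h disk disk)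
    (h0 : h (0, 0) = (0, 0)) (h1 : h (1, 0) = (1, 0)) :
    sigmaQ (fun q => g (h q)) = sigmaQ g + sigmaQ h := by
  have hgd : Differentiable ℝ g := hgc.differentiable (by simp)
  have hhd : Differentiable ℝ h := hhc.differentiable (by simp)
  set c : ℝ → ℝ × ℝ := fun t => h (t, 0) with hc_def
  set c' : ℝ → ℝ × ℝ := fun t => fderiv ℝ h (t, 0) (1, 0) with hc'_def
  have hι : ∀ t : ℝ, HasDerivAt (fun t : ℝ => ((t, 0) : ℝ × ℝ)) (1, 0) t :=
    fun t => (hasDerivAt_id t).prodMk (hasDerivAt_const t 0)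
  have hcd : ∀ t, HasDerivAt c (c' t) t :=
    fun t => ((hhd (t, 0)).hasFDerivAt).comp_hasDerivAt t (hι t)
  have hc'cont : Continuous c' := by
    have h1c : Continuous (fun t : ℝ => fderiv ℝ h (t, 0)) :=
      ((hhc.fderiv_right (m := (⊤ : ℕ∞)) (by simp)).continuous).comp
        (continuous_id.prodMk continuous_const)
    exact (ContinuousLinearMap.apply ℝ (ℝ × ℝ) (((1:ℝ), (0:ℝ)) : ℝ × ℝ)).continuous.comp h1c
  have hcdiff : Differentiable ℝ c := fun t => (hcd t).differentiableAt
  have hccont : Continuous c := hcdiff.continuous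
  have hmem : ∀ t ∈ uIcc (0:ℝ) 1, c t ∈ disk := by
    intro t ht
    rw [uIcc_of_le zero_le_one] at ht
    exact hhm (mem_disk_t ht.1 ht.2)
  -- rewrite the σ(g∘h) integrand
  have hE : (fun t : ℝ => ((g (h (t, 0))).1 * pdx (fun q => (g (h q)).2) (t, 0) -
      (g (h (t, 0))).2 * pdx (fun q => (g (h q)).1) (t, 0))) = fun t =>
      2 * (Pf g (c t) * (c' t).1 + Qf g (c t) * (c' t).2) +
        ((c t).1 * (c' t).2 - (c t).2 * (c' t).1) := by
    funext t
    have e2 : pdx (fun q => (g (h q)).2) (t, 0) =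
        (c' t).1 * pdx (fun q => (g q).2) (c t) + (c' t).2 * pdy (fun q => (g q).2) (c t) :=
      fderiv_comp_eval _ h (fun q => (hgd q).snd) hhd (t, 0) (1, 0)
    have e1 : pdx (fun q => (g (h q)).1) (t, 0) =
        (c' t).1 * pdx (fun q => (g q).1) (c t) + (c' t).2 * pdy (fun q => (g q).1) (c t) :=
      fderiv_comp_eval _ h (fun q => (hgd q).fst) hhd (t, 0) (1, 0)
    rw [show pdx (fun q => (g (h q)).2) (t, 0) = fderiv ℝ (fun q => (g (h q)).2) (t,0) (1,0) from rfl] at *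
    rw [e1, e2]
    unfold Pf Qf
    ring
  -- the inner-path integrand of σ(h)
  have hH : (fun t : ℝ => ((h (t, 0)).1 * pdx (fun q => (h q).2) (t, 0) -
      (h (t, 0)).2 * pdx (fun q => (h q).1) (t, 0))) = fun t =>
      ((c t).1 * (c' t).2 - (c t).2 * (c' t).1) := by
    funext t
    rw [show pdx (fun q => (h q).2) (t,0) = (c' t).2 from fderiv_snd_eval h hhd (t,0) (1,0),
      show pdx (fun q => (h q).1) (t,0) = (c' t).1 from fderiv_fst_eval h hhd (t,0) (1,0)]
  have hintX : IntervalIntegrable (fun t => Pf g (c t) * (c' t).1 + Qf g (c t) * (c' t).2)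
      volume 0 1 := by
    apply Continuous.intervalIntegrable
    exact (((contDiff_Pf hgc).continuous.comp hccont).mul (hc'cont.fst)).add
      (((contDiff_Qf hgc).continuous.comp hccont).mul (hc'cont.snd))
  have hintY : IntervalIntegrable (fun t => ((c t).1 * (c' t).2 - (c t).2 * (c' t).1))
      volume 0 1 := by
    apply Continuous.intervalIntegrable
    exact ((hccont.fst).mul (hc'cont.snd)).sub ((hccont.snd).mul (hc'cont.fst))
  have hpath := path_integral hgc hgj c c' hcd hc'cont hmem
  have hc1 : c 1 = ((1:ℝ), (0:ℝ)) := h1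
  have hc0 : c 0 = ((0:ℝ), (0:ℝ)) := h0
  have hsg := sigmaQ_eq_Ff hgc hgj
  unfold sigmaQ at hsg ⊢
  rw [hE, hH, intervalIntegral.integral_add (hintX.const_mul 2) hintY,
    intervalIntegral.integral_const_mul, hpath, hc1, hc0, ← hsg]
  ring

-- iterates
lemma IsSymp.iterate {h : ℝ × ℝ → ℝ × ℝ} (hh : IsSymp h) (n : ℕ) : IsSymp h^[n] := by
  induction n with
  | zero => exact IsSymp.id
  | succ n ih =>
    have e : h^[n+1] = fun q => h^[n] (h q) := by
      rw [Function.iterate_succ]; rfl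
    rw [e]
    exact ih.comp hh

lemma sigmaQ_id : sigmaQ (id : ℝ × ℝ → ℝ × ℝ) = 0 := by
  unfold sigmaQ
  have : (fun t : ℝ => ((id ((t, 0) : ℝ × ℝ)).1 * pdx (fun q => (id q : ℝ × ℝ).2) (t, 0) -
      (id ((t, 0) : ℝ × ℝ)).2 * pdx (fun q => (id q : ℝ × ℝ).1) (t, 0))) = fun _ => (0:ℝ) := by
    funext t
    have h2 : pdx (fun q => (id q : ℝ × ℝ).2) (t, 0) = 0 := by
      unfold pdx
      rw [show (fun q => (id q : ℝ × ℝ).2) = Prod.snd from rfl, fderiv_snd]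
      rfl
    rw [h2]
    show (t * 0 - 0 * _ : ℝ) = 0
    ring
  rw [this]
  simp

lemma sigmaQ_iterate {h : ℝ × ℝ → ℝ × ℝ} (hh : IsSymp h)
    (h0 : h (0, 0) = (0, 0)) (h1 : h (1, 0) = (1, 0)) (n : ℕ) :
    sigmaQ h^[n] = n * sigmaQ h := by
  induction n with
  | zero => simpa using sigmaQ_id
  | succ n ih =>
    have e : h^[n+1] = fun q => h^[n] (h q) := by
      rw [Function.iterate_succ]; rfl
    have hiter := hh.iterate n
    rw [e, sigmaQ_comp hiter.1 hiter.2.2.1 hh.1 hh.2.1 h0 h1, ih]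
    push_cast
    ring

def Atw (b : ℝ) : ℝ × ℝ → ℝ := fun p => b * (1 - (p.1 ^ 2 + p.2 ^ 2))
def tw (b : ℝ) : ℝ × ℝ → ℝ × ℝ := fun p =>
  (p.1 * Real.cos (Atw b p) - p.2 * Real.sin (Atw b p),
   p.1 * Real.sin (Atw b p) + p.2 * Real.cos (Atw b p))
def tw' (b : ℝ) : ℝ × ℝ → ℝ × ℝ := fun p =>
  (p.1 * Real.cos (Atw b p) + p.2 * Real.sin (Atw b p),
   -(p.1 * Real.sin (Atw b p)) + p.2 * Real.cos (Atw b p))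

lemma contDiff_Atw (b : ℝ) : ContDiff ℝ (⊤ : ℕ∞) (Atw b) :=
  contDiff_const.mul (contDiff_const.sub ((contDiff_fst.pow 2).add (contDiff_snd.pow 2)))

lemma contDiff_tw (b : ℝ) : ContDiff ℝ (⊤ : ℕ∞) (tw b) :=
  ((contDiff_fst.mul (Real.contDiff_cos.comp (contDiff_Atw b))).sub
    (contDiff_snd.mul (Real.contDiff_sin.comp (contDiff_Atw b)))).prodMk
  ((contDiff_fst.mul (Real.contDiff_sin.comp (contDiff_Atw b))).add
    (contDiff_snd.mul (Real.contDiff_cos.comp (contDiff_Atw b))))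

lemma contDiff_tw' (b : ℝ) : ContDiff ℝ (⊤ : ℕ∞) (tw' b) :=
  ((contDiff_fst.mul (Real.contDiff_cos.comp (contDiff_Atw b))).add
    (contDiff_snd.mul (Real.contDiff_sin.comp (contDiff_Atw b)))).prodMk
  (((contDiff_fst.mul (Real.contDiff_sin.comp (contDiff_Atw b))).neg).add
    (contDiff_snd.mul (Real.contDiff_cos.comp (contDiff_Atw b))))

section derivs
variable (b : ℝ) (p : ℝ × ℝ)

lemma hasFDerivAt_Atw : HasFDerivAt (Atw b)
    ((-(2*b*p.1)) • ContinuousLinearMap.fst ℝ ℝ ℝ +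
     (-(2*b*p.2)) • ContinuousLinearMap.snd ℝ ℝ ℝ) p := by
  have h2 : HasFDerivAt (fun q : ℝ × ℝ => q.1*q.1 + q.2*q.2)
      (p.1 • ContinuousLinearMap.fst ℝ ℝ ℝ + p.1 • ContinuousLinearMap.fst ℝ ℝ ℝ +
        (p.2 • ContinuousLinearMap.snd ℝ ℝ ℝ + p.2 • ContinuousLinearMap.snd ℝ ℝ ℝ)) p :=
    ((hasFDerivAt_fst (p := p)).mul (hasFDerivAt_fst (p := p))).add
      ((hasFDerivAt_snd (p := p)).mul (hasFDerivAt_snd (p := p)))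
  have heq : Atw b = fun q : ℝ × ℝ => b * (1 - (q.1*q.1 + q.2*q.2)) := by
    funext q; unfold Atw; ring
  rw [heq]
  have h3 := ((hasFDerivAt_const (1:ℝ) p).sub h2).const_mul b
  refine h3.congr_fderiv ?_
  apply ContinuousLinearMap.ext
  intro v
  rw [clm_eval _ v, clm_eval _ v]
  simp
  ring

lemma pdx_tw1 : pdx (fun q => (tw b q).1) p =
    Real.cos (Atw b p) + 2*b*p.1 * (p.1 * Real.sin (Atw b p) + p.2 * Real.cos (Atw b p)) := by
  have hA := hasFDerivAt_Atw b p
  have hcos : HasFDerivAt (fun q : ℝ × ℝ => Real.cos (Atw b q)) _ p :=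
    (Real.hasDerivAt_cos (Atw b p)).comp_hasFDerivAt p hA
  have hsin : HasFDerivAt (fun q : ℝ × ℝ => Real.sin (Atw b q)) _ p :=
    (Real.hasDerivAt_sin (Atw b p)).comp_hasFDerivAt p hA
  have h1 : HasFDerivAt (fun q : ℝ × ℝ => q.1 * Real.cos (Atw b q) - q.2 * Real.sin (Atw b q)) _ p :=
    ((hasFDerivAt_fst (p := p)).mul hcos).sub ((hasFDerivAt_snd (p := p)).mul hsin)
  rw [show (fun q => (tw b q).1) =
    (fun q : ℝ × ℝ => q.1 * Real.cos (Atw b q) - q.2 * Real.sin (Atw b q)) from rfl,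
    pdx, h1.fderiv]
  simp
  ring

lemma pdy_tw1 : pdy (fun q => (tw b q).1) p =
    -Real.sin (Atw b p) + 2*b*p.2 * (p.1 * Real.sin (Atw b p) + p.2 * Real.cos (Atw b p)) := by
  have hA := hasFDerivAt_Atw b p
  have hcos : HasFDerivAt (fun q : ℝ × ℝ => Real.cos (Atw b q)) _ p :=
    (Real.hasDerivAt_cos (Atw b p)).comp_hasFDerivAt p hA
  have hsin : HasFDerivAt (fun q : ℝ × ℝ => Real.sin (Atw b q)) _ p :=
    (Real.hasDerivAt_sin (Atw b p)).comp_hasFDerivAt p hA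
  have h1 : HasFDerivAt (fun q : ℝ × ℝ => q.1 * Real.cos (Atw b q) - q.2 * Real.sin (Atw b q)) _ p :=
    ((hasFDerivAt_fst (p := p)).mul hcos).sub ((hasFDerivAt_snd (p := p)).mul hsin)
  rw [show (fun q => (tw b q).1) =
    (fun q : ℝ × ℝ => q.1 * Real.cos (Atw b q) - q.2 * Real.sin (Atw b q)) from rfl,
    pdy, h1.fderiv]
  simp
  ring

lemma pdx_tw2 : pdx (fun q => (tw b q).2) p =
    Real.sin (Atw b p) - 2*b*p.1 * (p.1 * Real.cos (Atw b p) - p.2 * Real.sin (Atw b p)) := by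
  have hA := hasFDerivAt_Atw b p
  have hcos : HasFDerivAt (fun q : ℝ × ℝ => Real.cos (Atw b q)) _ p :=
    (Real.hasDerivAt_cos (Atw b p)).comp_hasFDerivAt p hA
  have hsin : HasFDerivAt (fun q : ℝ × ℝ => Real.sin (Atw b q)) _ p :=
    (Real.hasDerivAt_sin (Atw b p)).comp_hasFDerivAt p hA
  have h1 : HasFDerivAt (fun q : ℝ × ℝ => q.1 * Real.sin (Atw b q) + q.2 * Real.cos (Atw b q)) _ p :=
    ((hasFDerivAt_fst (p := p)).mul hsin).add ((hasFDerivAt_snd (p := p)).mul hcos)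
  rw [show (fun q => (tw b q).2) =
    (fun q : ℝ × ℝ => q.1 * Real.sin (Atw b q) + q.2 * Real.cos (Atw b q)) from rfl,
    pdx, h1.fderiv]
  simp
  ring

lemma pdy_tw2 : pdy (fun q => (tw b q).2) p =
    Real.cos (Atw b p) - 2*b*p.2 * (p.1 * Real.cos (Atw b p) - p.2 * Real.sin (Atw b p)) := by
  have hA := hasFDerivAt_Atw b p
  have hcos : HasFDerivAt (fun q : ℝ × ℝ => Real.cos (Atw b q)) _ p :=
    (Real.hasDerivAt_cos (Atw b p)).comp_hasFDerivAt p hA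
  have hsin : HasFDerivAt (fun q : ℝ × ℝ => Real.sin (Atw b q)) _ p :=
    (Real.hasDerivAt_sin (Atw b p)).comp_hasFDerivAt p hA
  have h1 : HasFDerivAt (fun q : ℝ × ℝ => q.1 * Real.sin (Atw b q) + q.2 * Real.cos (Atw b q)) _ p :=
    ((hasFDerivAt_fst (p := p)).mul hsin).add ((hasFDerivAt_snd (p := p)).mul hcos)
  rw [show (fun q => (tw b q).2) =
    (fun q : ℝ × ℝ => q.1 * Real.sin (Atw b q) + q.2 * Real.cos (Atw b q)) from rfl,
    pdy, h1.fderiv]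
  simp
  ring

lemma jacDet_tw : jacDet (tw b) p = 1 := by
  unfold jacDet
  rw [pdx_tw1, pdy_tw1, pdx_tw2, pdy_tw2]
  linear_combination Real.sin_sq_add_cos_sq (Atw b p)

lemma rho_tw : (tw b p).1 ^ 2 + (tw b p).2 ^ 2 = p.1 ^ 2 + p.2 ^ 2 := by
  show (p.1 * Real.cos (Atw b p) - p.2 * Real.sin (Atw b p)) ^ 2 +
    (p.1 * Real.sin (Atw b p) + p.2 * Real.cos (Atw b p)) ^ 2 = _
  linear_combination (p.1 ^ 2 + p.2 ^ 2) * Real.sin_sq_add_cos_sq (Atw b p)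

lemma rho_tw' : (tw' b p).1 ^ 2 + (tw' b p).2 ^ 2 = p.1 ^ 2 + p.2 ^ 2 := by
  show (p.1 * Real.cos (Atw b p) + p.2 * Real.sin (Atw b p)) ^ 2 +
    (-(p.1 * Real.sin (Atw b p)) + p.2 * Real.cos (Atw b p)) ^ 2 = _
  linear_combination (p.1 ^ 2 + p.2 ^ 2) * Real.sin_sq_add_cos_sq (Atw b p)

lemma Atw_tw : Atw b (tw b p) = Atw b p := by
  unfold Atw
  rw [rho_tw]

lemma Atw_tw' : Atw b (tw' b p) = Atw b p := by
  unfold Atw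
  rw [rho_tw']

lemma tw'_tw : tw' b (tw b p) = p := by
  have h1 := Atw_tw b p
  unfold tw' tw
  ext
  · show (tw b p).1 * Real.cos (Atw b (tw b p)) + (tw b p).2 * Real.sin (Atw b (tw b p)) = p.1
    rw [h1]
    show (p.1 * Real.cos (Atw b p) - p.2 * Real.sin (Atw b p)) * Real.cos (Atw b p) +
      (p.1 * Real.sin (Atw b p) + p.2 * Real.cos (Atw b p)) * Real.sin (Atw b p) = p.1
    linear_combination p.1 * Real.sin_sq_add_cos_sq (Atw b p)
  · show -((tw b p).1 * Real.sin (Atw b (tw b p))) + (tw b p).2 * Real.cos (Atw b (tw b p)) = p.2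
    rw [h1]
    show -((p.1 * Real.cos (Atw b p) - p.2 * Real.sin (Atw b p)) * Real.sin (Atw b p)) +
      (p.1 * Real.sin (Atw b p) + p.2 * Real.cos (Atw b p)) * Real.cos (Atw b p) = p.2
    linear_combination p.2 * Real.sin_sq_add_cos_sq (Atw b p)

lemma tw_tw' : tw b (tw' b p) = p := by
  have h1 := Atw_tw' b p
  ext
  · show (tw' b p).1 * Real.cos (Atw b (tw' b p)) - (tw' b p).2 * Real.sin (Atw b (tw' b p)) = p.1
    rw [h1]
    show (p.1 * Real.cos (Atw b p) + p.2 * Real.sin (Atw b p)) * Real.cos (Atw b p) -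
      (-(p.1 * Real.sin (Atw b p)) + p.2 * Real.cos (Atw b p)) * Real.sin (Atw b p) = p.1
    linear_combination p.1 * Real.sin_sq_add_cos_sq (Atw b p)
  · show (tw' b p).1 * Real.sin (Atw b (tw' b p)) + (tw' b p).2 * Real.cos (Atw b (tw' b p)) = p.2
    rw [h1]
    show (p.1 * Real.cos (Atw b p) + p.2 * Real.sin (Atw b p)) * Real.sin (Atw b p) +
      (-(p.1 * Real.sin (Atw b p)) + p.2 * Real.cos (Atw b p)) * Real.cos (Atw b p) = p.2
    linear_combination p.2 * Real.sin_sq_add_cos_sq (Atw b p)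

end derivs

lemma mapsTo_tw (b : ℝ) : MapsTo (tw b) disk disk := by
  intro p hp
  simp only [disk, Set.mem_setOf_eq] at *
  rw [rho_tw]
  exact hp

lemma mapsTo_tw' (b : ℝ) : MapsTo (tw' b) disk disk := by
  intro p hp
  simp only [disk, Set.mem_setOf_eq] at *
  rw [rho_tw']
  exact hp

lemma isSympO_tw (b : ℝ) : IsSympO (tw b) := by
  refine ⟨⟨contDiff_tw b, mapsTo_tw b, fun p _ => jacDet_tw b p, tw' b, contDiff_tw' b,
    mapsTo_tw' b, fun p _ => tw'_tw b p, fun p _ => tw_tw' b p⟩, ?_⟩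
  unfold tw
  simp

lemma tw_bdry (b : ℝ) : ∀ p ∈ bdry, tw b p = p := by
  intro p hp
  have h1 : Atw b p = 0 := by
    simp only [bdry, Set.mem_setOf_eq] at hp
    unfold Atw
    rw [hp]
    ring
  unfold tw
  rw [h1]
  simp

lemma sigmaQ_tw (b : ℝ) : sigmaQ (tw b) = -b/4 := by
  unfold sigmaQ
  have hE : (fun t : ℝ => ((tw b (t, 0)).1 * pdx (fun q => (tw b q).2) (t, 0) -
      (tw b (t, 0)).2 * pdx (fun q => (tw b q).1) (t, 0))) =
      fun t : ℝ => -2*b*t^3 := by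
    funext t
    rw [pdx_tw1, pdx_tw2]
    show (t * Real.cos (Atw b (t, 0)) - 0 * Real.sin (Atw b (t, 0))) * _ -
      (t * Real.sin (Atw b (t, 0)) + 0 * Real.cos (Atw b (t, 0))) * _ = _
    simp only [Prod.fst, Prod.snd]
    linear_combination (-2*b*t^3) * Real.sin_sq_add_cos_sq (Atw b (t, 0))
  rw [hE]
  have : ∫ t in (0:ℝ)..1, (-2*b*t^3) = -2*b * ∫ t in (0:ℝ)..1, t^3 := by
    rw [← intervalIntegral.integral_const_mul]
  rw [this, integral_pow]
  norm_num
  ring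

/-- for every `h ∈ G_{o,rel}` (origin-preserving
symplectomorphism which is the identity on the boundary) the limit
`lim_n σ(hⁿ)/n` exists and equals `σ(h) = Flux_ℝ(h)`, and every real value is
attained by such an `h`; hence the homogenization `σ̄` is a surjective
extension of the flux homomorphism. -/
theorem sigma_homogenization_extends_flux_and_is_surjective :
    (∀ h : ℝ × ℝ → ℝ × ℝ, IsSympO h → (∀ p ∈ bdry, h p = p) →
      Tendsto (fun n : ℕ => sigmaQ h^[n] / (n : ℝ)) atTop (𝓝 (sigmaQ h))) ∧
    (∀ c : ℝ, ∃ h : ℝ × ℝ → ℝ × ℝ, IsSympO h ∧ (∀ p ∈ bdry, h p = p) ∧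
      sigmaQ h = c) := by
  constructor
  · intro h hh hbd
    have h1 : h (1, 0) = (1, 0) := hbd (1, 0) (by
      show (1:ℝ) ^ 2 + (0:ℝ) ^ 2 = 1
      norm_num)
    have h0 : h (0, 0) = (0, 0) := hh.2
    have key : ∀ n : ℕ, sigmaQ h^[n] = n * sigmaQ h := sigmaQ_iterate hh.1 h0 h1
    have heq : (fun n : ℕ => sigmaQ h^[n] / (n : ℝ)) =ᶠ[atTop] fun _ => sigmaQ h := by
      filter_upwards [eventually_ge_atTop 1] with n hn
      rw [key n]
      have hne : (n : ℝ) ≠ 0 := Nat.cast_ne_zero.mpr (by omega)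
      field_simp
    exact Tendsto.congr' heq.symm tendsto_const_nhds
  · intro c
    refine ⟨tw (-4 * c), isSympO_tw _, tw_bdry _, ?_⟩
    rw [sigmaQ_tw]
    ring
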